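/- Let A, B be positive definite n×n complex matrices. If ((A^{1/2}+B^{1/2})/2)^2 = (1/4)(A + B + A(A^{-1}#B) + (A^{-1}#B)A), then AB = BA. -/

import Mathlib

open Matrix
open scoped ComplexOrder

open Classical in
/-- The positive square root of a positive semidefinite matrix (junk value `0` otherwise). -/
noncomputable def msqrt {n : Type*} [Fintype n] [DecidableEq n] (A : Matrix n n ℂ) :
    Matrix n n ℂ :=
  if h : A.PosSemidef then
    (h.1.eigenvectorUnitary : Matrix n n ℂ) * diagonal ((↑) ∘ Real.sqrt ∘ h.1.eigenvalues) *
      (star h.1.eigenvectorUnitary : Matrix n n ℂ) else 0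

/-- The geometric mean `P # Q = P^{1/2} (P^{-1/2} Q P^{-1/2})^{1/2} P^{1/2}`. -/
noncomputable def geoMean {n : Type*} [Fintype n] [DecidableEq n] (P Q : Matrix n n ℂ) :
    Matrix n n ℂ :=
  msqrt P * msqrt ((msqrt P)⁻¹ * Q * (msqrt P)⁻¹) * msqrt P

/-! Write `S = A^{1/2}`, `T = B^{1/2}` and `M = (SBS)^{1/2}`, so that `A⁻¹ # B = S⁻¹ M S⁻¹`.
Expanding the square turns the hypothesis into `ST + TS = SMS⁻¹ + S⁻¹MS`, and taking traces
gives `tr (TS) = tr M`. Since `(TS)ᴴ (TS) = SBS = M²`, `M` is the modulus of `TS`, and a matrix whose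
trace equals that of its modulus is its modulus: with `R = M^{1/2}`,
`‖TS R⁻¹ - R‖²_F = 2 tr M - 2 Re tr (TS) = 0`. Hence `TS = M` is Hermitian, i.e.
`ST = (TS)ᴴ = TS`, and then `A = S²` and `B = T²` commute. -/

open scoped MatrixOrder

section RCLike

variable {𝕜 n : Type*} [RCLike 𝕜] [Fintype n] [DecidableEq n]

theorem Matrix.eq_of_conjTranspose_mul_self_eq_mul_self_of_trace_eq {X M : Matrix n n 𝕜}
    (hM : M.PosDef) (hXX : Xᴴ * X = M * M) (htr : X.trace = M.trace) : X = M := by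
  set R := CFC.sqrt M
  have hR : R.PosDef := (IsStrictlyPositive.sqrt M hM.isStrictlyPositive).posDef
  have hRR : R * R = M := CFC.sqrt_mul_sqrt_self M hM.posSemidef.nonneg
  have hRd : IsUnit R.det := (isUnit_iff_isUnit_det R).mp hR.isUnit
  have hRiR : R⁻¹ * R = 1 := nonsing_inv_mul R hRd
  have hRRi : R * R⁻¹ = 1 := mul_nonsing_inv R hRd
  set Y := X * R⁻¹ - R
  have hYY : Yᴴ * Y = M - R⁻¹ * Xᴴ * R - R * X * R⁻¹ + M := by
    have hRXXR : R⁻¹ * (Xᴴ * X) * R⁻¹ = M := by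
      rw [hXX, ← hRR]
      calc R⁻¹ * (R * R * (R * R)) * R⁻¹ = (R⁻¹ * R) * (R * R) * (R * R⁻¹) := by
            noncomm_ring
        _ = R * R := by rw [hRiR, hRRi, Matrix.one_mul, Matrix.mul_one]
    have hRH : Rᴴ = R := hR.isHermitian
    calc Yᴴ * Y = R⁻¹ * (Xᴴ * X) * R⁻¹ - R⁻¹ * Xᴴ * R - R * X * R⁻¹ + R * R := by
          simp only [Y, conjTranspose_sub, conjTranspose_mul, conjTranspose_nonsing_inv, hRH]
          noncomm_ring
      _ = M - R⁻¹ * Xᴴ * R - R * X * R⁻¹ + M := by rw [hRXXR, hRR]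
  have hY : Y = 0 := by
    rw [← trace_conjTranspose_mul_self_eq_zero_iff, hYY, trace_add, trace_sub, trace_sub,
      trace_conj' hR.isUnit, trace_conj hR.isUnit, trace_conjTranspose, htr,
      ← trace_conjTranspose, hM.isHermitian.eq]
    ring
  calc X = Y * R + R * R := by
        simp only [Y, sub_mul, Matrix.mul_assoc, hRiR, Matrix.mul_one]; abel
    _ = M := by rw [hY, zero_mul, zero_add, hRR]

end RCLike

section msqrt

variable {n : Type*} [Fintype n] [DecidableEq n] {A : Matrix n n ℂ}

theorem msqrt_eq_cfcSqrt (hA : A.PosSemidef) : msqrt A = CFC.sqrt A := by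
  rw [CFC.sqrt_eq_real_sqrt A hA.nonneg, cfcₙ_eq_cfc (hf0 := by simp), hA.1.cfc_eq Real.sqrt,
    msqrt, dif_pos hA, IsHermitian.cfc, Unitary.conjStarAlgAut_apply]
  rfl

theorem msqrt_posSemidef (hA : A.PosSemidef) : (msqrt A).PosSemidef := by
  rw [msqrt_eq_cfcSqrt hA]
  exact (CFC.sqrt_nonneg A).posSemidef

theorem msqrt_posDef (hA : A.PosDef) : (msqrt A).PosDef := by
  rw [msqrt_eq_cfcSqrt hA.posSemidef]
  exact (IsStrictlyPositive.sqrt A hA.isStrictlyPositive).posDef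

theorem msqrt_mul_self (hA : A.PosSemidef) : msqrt A * msqrt A = A := by
  rw [msqrt_eq_cfcSqrt hA]
  exact CFC.sqrt_mul_sqrt_self A hA.nonneg

theorem msqrt_inv (hA : A.PosSemidef) : msqrt A⁻¹ = (msqrt A)⁻¹ := by
  rw [msqrt_eq_cfcSqrt hA, msqrt_eq_cfcSqrt hA.inv, hA.inv_sqrt]

theorem geoMean_inv_left (hA : A.PosDef) (B : Matrix n n ℂ) :
    geoMean A⁻¹ B = (msqrt A)⁻¹ * msqrt (msqrt A * B * msqrt A) * (msqrt A)⁻¹ := by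
  have hS : IsUnit (msqrt A).det := (isUnit_iff_isUnit_det _).mp (msqrt_posDef hA).isUnit
  rw [geoMean, msqrt_inv hA.posSemidef, nonsing_inv_nonsing_inv _ hS]

theorem mul_geoMean_inv_left (hA : A.PosDef) (B : Matrix n n ℂ) :
    A * geoMean A⁻¹ B = msqrt A * msqrt (msqrt A * B * msqrt A) * (msqrt A)⁻¹ := by
  have hS : IsUnit (msqrt A).det := (isUnit_iff_isUnit_det _).mp (msqrt_posDef hA).isUnit
  rw [geoMean_inv_left hA]
  nth_rewrite 1 [← msqrt_mul_self hA.posSemidef]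
  simp only [Matrix.mul_assoc, mul_nonsing_inv_cancel_left _ _ hS]

theorem geoMean_inv_left_mul (hA : A.PosDef) (B : Matrix n n ℂ) :
    geoMean A⁻¹ B * A = (msqrt A)⁻¹ * msqrt (msqrt A * B * msqrt A) * msqrt A := by
  have hS : IsUnit (msqrt A).det := (isUnit_iff_isUnit_det _).mp (msqrt_posDef hA).isUnit
  rw [geoMean_inv_left hA]
  nth_rewrite 5 [← msqrt_mul_self hA.posSemidef]
  simp only [← Matrix.mul_assoc, nonsing_inv_mul_cancel_right _ _ hS]

end msqrt

theorem mul_add_mul_eq_of_half_smul_add_sq_eq {R : Type*} [Ring R] [Algebra ℂ R] {S T P Q : R}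
    (h : ((1 / 2 : ℂ) • (S + T)) ^ 2 = (1 / 4 : ℂ) • (S * S + T * T + P + Q)) :
    S * T + T * S = P + Q := by
  rw [smul_pow, show (1 / 2 : ℂ) ^ 2 = 1 / 4 by norm_num] at h
  have h' := smul_right_injective R (by norm_num : (1 / 4 : ℂ) ≠ 0) h
  rw [sq] at h'
  calc S * T + T * S = (S + T) * (S + T) - S * S - T * T := by noncomm_ring
    _ = P + Q := by rw [h']; abel

theorem stmt6 {n : Type*} [Fintype n] [DecidableEq n] (A B : Matrix n n ℂ)
    (hA : A.PosDef) (hB : B.PosDef)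
    (h : ((1 / 2 : ℂ) • (msqrt A + msqrt B)) ^ 2 =
      (1 / 4 : ℂ) • (A + B + A * geoMean A⁻¹ B + geoMean A⁻¹ B * A)) :
    A * B = B * A := by
  rw [mul_geoMean_inv_left hA, geoMean_inv_left_mul hA] at h
  have hSS := msqrt_mul_self hA.posSemidef
  have hTT := msqrt_mul_self hB.posSemidef
  set S := msqrt A
  set T := msqrt B
  have hS : S.PosDef := msqrt_posDef hA
  have hSH : Sᴴ = S := hS.isHermitian
  have hTH : Tᴴ = T := (msqrt_posSemidef hB.posSemidef).isHermitian
  have hSBS : (S * B * S).PosDef := by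
    have := hB.mul_mul_conjTranspose_same (vecMul_injective_iff_isUnit.mpr hS.isUnit)
    rwa [hSH] at this
  set M := msqrt (S * B * S)
  have hcross : S * T + T * S = S * M * S⁻¹ + S⁻¹ * M * S := by
    refine mul_add_mul_eq_of_half_smul_add_sq_eq (h.trans ?_)
    rw [hSS, hTT]
  have htrace : (T * S).trace = M.trace := by
    have := congrArg trace hcross
    rw [trace_add, trace_add, trace_mul_comm S T, trace_conj hS.isUnit,
      trace_conj' hS.isUnit] at this
    linear_combination this / 2
  have hTS : T * S = M := by
    refine eq_of_conjTranspose_mul_self_eq_mul_self_of_trace_eq (msqrt_posDef hSBS) ?_ htrace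
    rw [msqrt_mul_self hSBS.posSemidef, conjTranspose_mul, hSH, hTH, ← hTT]
    noncomm_ring
  have hST : Commute S T := by
    calc S * T = (T * S)ᴴ := by rw [conjTranspose_mul, hSH, hTH]
      _ = T * S := by rw [hTS, (msqrt_posDef hSBS).isHermitian.eq]
  rw [← hSS, ← hTT]
  exact (hST.mul_right hST).mul_left (hST.mul_right hST)
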